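/- arXiv:2508.17406 — 4 statements merged into one kernel-verified Lean document; each statement's English description precedes it below -/
import Mathlib

section
/- For a full-rank lattice L of rank n in a Euclidean space, the function t ↦ log θ_L(t) + (n/2) log t is nondecreasing on (0, ∞), where θ_L(t) = ∑_{v∈L} e^{-πt‖v‖²}. -/
/-!
No Poisson summation is needed. Put `F(t) = t^{n/2} θ_L(t)` and let `Θ_a(x) = ∑_{v ∈ L} e^{-πa‖x+v‖²}`
be the periodized Gaussian. Unfolding the integral over a fundamental domain `D` and completing
the square give `∫_D Θ_a Θ_c = (a+c)^{-n/2} θ_L(ac/(a+c))`, so by Cauchy–Schwarz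
`F(2ac/(a+c))² ≤ F(a) F(c)`: the function `p ↦ log F(1/p)` is midpoint convex. Comparing `θ_L(t)`
with a Gaussian integral over `ℝⁿ` shows that `F` is bounded on every `(0, t₀]`. A midpoint
log-convex function bounded above on a half-line `[p, ∞)` is nonincreasing there, hence `F` is
nondecreasing on `(0, ∞)`.
-/

open MeasureTheory Real ENNReal Set Module Submodule

theorem antitone_of_sq_le_mul_of_bddAbove {v : ℕ → ℝ} (hpos : ∀ k, 0 < v k)
    (hv : ∀ k, v (k + 1) ^ 2 ≤ v k * v (k + 2)) (hbdd : BddAbove (range v)) :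
    Antitone v := by
  suffices h : ∀ w : ℕ → ℝ, (∀ k, 0 < w k) → (∀ k, w (k + 1) ^ 2 ≤ w k * w (k + 2)) →
      BddAbove (range w) → w 1 ≤ w 0 by
    refine antitone_nat_of_succ_le fun k => ?_
    simpa using h (fun j => v (k + j)) (fun j => hpos _)
      (fun j => by simpa [add_assoc] using hv (k + j))
      (hbdd.mono (range_subset_iff.2 fun j => mem_range_self _))
  intro w hpos hw hbdd
  by_contra! hlt
  set ρ := w 1 / w 0
  have hρ : 1 < ρ := (one_lt_div (hpos 0)).2 hlt
  -- the ratios `w (k + 1) / w k` are nondecreasing, so `w` grows at least like `ρ ^ k`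
  have hratio : ∀ k, ρ * w k ≤ w (k + 1) := by
    intro k
    induction k with
    | zero => rw [div_mul_cancel₀ _ (hpos 0).ne']
    | succ k ih =>
      have := hw k
      have := hpos k
      nlinarith [mul_le_mul_of_nonneg_left ih (hpos (k + 1)).le]
  have hgeom : ∀ k, w 0 * ρ ^ k ≤ w k := by
    intro k
    induction k with
    | zero => simp
    | succ k ih =>
      calc w 0 * ρ ^ (k + 1) = ρ * (w 0 * ρ ^ k) := by ring
        _ ≤ ρ * w k := by gcongr
        _ ≤ w (k + 1) := hratio k
  obtain ⟨C, hC⟩ := hbdd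
  obtain ⟨k, hk⟩ := pow_unbounded_of_one_lt (C / w 0) hρ
  rw [div_lt_iff₀ (hpos 0)] at hk
  linarith [hC (mem_range_self k), hgeom k]

theorem antitoneOn_of_sq_midpoint_le_of_bddAbove {f : ℝ → ℝ} {c : ℝ}
    (hpos : ∀ x, c < x → 0 < f x)
    (hmid : ∀ x y, c < x → c < y → f ((x + y) / 2) ^ 2 ≤ f x * f y)
    (hbdd : ∀ p, c < p → BddAbove (f '' Ici p)) :
    AntitoneOn f (Ioi c) := by
  intro p hp q _ hpq
  set r := q - p
  have hle : ∀ k : ℕ, p ≤ p + k * r := fun k =>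
    le_add_of_nonneg_right (mul_nonneg k.cast_nonneg (sub_nonneg.2 hpq))
  have hmem : ∀ k : ℕ, c < p + k * r := fun k => lt_of_lt_of_le hp (hle k)
  have hanti := antitone_of_sq_le_mul_of_bddAbove (v := fun k : ℕ => f (p + k * r))
    (fun k => hpos _ (hmem k))
    (fun k => by
      have h := hmid _ _ (hmem k) (hmem (k + 2))
      push_cast at h ⊢
      convert h using 4
      ring)
    ((hbdd p hp).mono (range_subset_iff.2 fun k => mem_image_of_mem f (hle k)))
  simpa [r] using hanti (Nat.zero_le 1)

theorem lintegral_mul_sq_le {α : Type*} [MeasurableSpace α] {μ : Measure α} {f g : α → ℝ≥0∞}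
    (hf : AEMeasurable f μ) (hg : AEMeasurable g μ) :
    (∫⁻ x, f x * g x ∂μ) ^ 2 ≤ (∫⁻ x, f x ^ 2 ∂μ) * ∫⁻ x, g x ^ 2 ∂μ := by
  have h := ENNReal.lintegral_mul_le_Lp_mul_Lq μ Real.HolderConjugate.two_two hf hg
  simp only [Pi.mul_apply, ENNReal.rpow_two] at h
  calc (∫⁻ x, f x * g x ∂μ) ^ 2
      ≤ ((∫⁻ x, f x ^ 2 ∂μ) ^ (1 / 2 : ℝ) * (∫⁻ x, g x ^ 2 ∂μ) ^ (1 / 2 : ℝ)) ^ 2 := by gcongr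
    _ = (∫⁻ x, f x ^ 2 ∂μ) * ∫⁻ x, g x ^ 2 ∂μ := by
      rw [mul_pow, ← ENNReal.rpow_natCast, ← ENNReal.rpow_natCast, ← ENNReal.rpow_mul,
        ← ENNReal.rpow_mul]
      norm_num

namespace LatticeTheta

section Gaussian

variable {E : Type*} [NormedAddCommGroup E]

noncomputable def gaussian (a : ℝ) (x : E) : ℝ≥0∞ := ENNReal.ofReal (rexp (-π * a * ‖x‖ ^ 2))

theorem gaussian_ne_top (a : ℝ) (x : E) : gaussian a x ≠ ∞ := ofReal_ne_top

theorem measurable_gaussian [MeasurableSpace E] [OpensMeasurableSpace E] (a : ℝ) :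
    Measurable (gaussian a : E → ℝ≥0∞) :=
  ENNReal.measurable_ofReal.comp
    (by fun_prop : Continuous fun x : E => rexp (-π * a * ‖x‖ ^ 2)).measurable

theorem gaussian_le_mul_gaussian_add {t d : ℝ} (ht : 0 ≤ t) (v : E) {y : E} (hy : ‖y‖ ≤ d) :
    gaussian t v ≤ ENNReal.ofReal (rexp (π * t * d ^ 2)) * gaussian (t / 2) (v + y) := by
  simp only [gaussian]
  rw [← ENNReal.ofReal_mul (exp_pos _).le, ← exp_add]
  refine ENNReal.ofReal_le_ofReal (exp_le_exp.2 ?_)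
  have hy2 : ‖y‖ ^ 2 ≤ d ^ 2 := pow_le_pow_left₀ (norm_nonneg y) hy 2
  have hpar : ‖v + y‖ ^ 2 ≤ 2 * ‖v‖ ^ 2 + 2 * ‖y‖ ^ 2 := by
    nlinarith [norm_add_le v y, norm_nonneg (v + y), sq_nonneg (‖v‖ - ‖y‖)]
  nlinarith [mul_le_mul_of_nonneg_left hpar (by positivity : 0 ≤ π * t),
    mul_le_mul_of_nonneg_left hy2 (by positivity : 0 ≤ π * t)]

variable [InnerProductSpace ℝ E]

-- completing the square in `x`
theorem gaussian_mul_gaussian_add {a b : ℝ} (hab : a + b ≠ 0) (x w : E) :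
    gaussian a x * gaussian b (x + w)
      = gaussian (a * b / (a + b)) w * gaussian (a + b) (x + (b / (a + b)) • w) := by
  simp only [gaussian]
  rw [← ENNReal.ofReal_mul (exp_pos _).le, ← ENNReal.ofReal_mul (exp_pos _).le,
    ← exp_add, ← exp_add, norm_add_sq_real, norm_add_sq_real, real_inner_smul_right, norm_smul,
    mul_pow, norm_eq_abs, sq_abs]
  congr 2
  field_simp
  ring

variable [FiniteDimensional ℝ E] [MeasurableSpace E] [BorelSpace E]

theorem lintegral_gaussian {a : ℝ} (ha : 0 < a) :
    ∫⁻ x : E, gaussian a x = ENNReal.ofReal (a ^ (-(finrank ℝ E : ℝ) / 2)) := by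
  have hint := GaussianFourier.integral_rexp_neg_mul_sq_norm (V := E) (by positivity : 0 < π * a)
  rw [show π / (π * a) = a⁻¹ by field_simp, inv_rpow ha.le, ← rpow_neg ha.le, ← neg_div] at hint
  have hexp : ∀ x : E, -π * a * ‖x‖ ^ 2 = -(π * a) * ‖x‖ ^ 2 := fun x => by ring
  simp_rw [gaussian, hexp]
  rw [← ofReal_integral_eq_lintegral_ofReal, hint]
  · exact Integrable.of_integral_ne_zero (by rw [hint]; positivity)
  · exact Filter.Eventually.of_forall fun x => (exp_pos _).le

theorem lintegral_gaussian_mul_gaussian_add {a b : ℝ} (hab : 0 < a + b) (w : E) :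
    ∫⁻ x, gaussian a x * gaussian b (x + w)
      = ENNReal.ofReal ((a + b) ^ (-(finrank ℝ E : ℝ) / 2)) * gaussian (a * b / (a + b)) w := by
  simp_rw [gaussian_mul_gaussian_add hab.ne']
  rw [lintegral_const_mul' _ _ (gaussian_ne_top _ _),
    lintegral_add_right_eq_self (gaussian (a + b)), lintegral_gaussian hab, mul_comm]

end Gaussian

section Lattice

variable {E : Type*} [NormedAddCommGroup E] [NormedSpace ℝ E] {ι : Type*} [Fintype ι]
  (b : Basis ι ℝ E)

noncomputable def periodizedGaussian (a : ℝ) (x : E) : ℝ≥0∞ :=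
  ∑' m : ι → ℤ, gaussian a (x + ∑ i, m i • b i)

noncomputable def theta (t : ℝ) : ℝ≥0∞ := ∑' m : ι → ℤ, gaussian t (∑ i, m i • b i)

noncomputable def scaledTheta (t : ℝ) : ℝ≥0∞ :=
  ENNReal.ofReal (t ^ ((finrank ℝ E : ℝ) / 2)) * theta b t

theorem periodizedGaussian_lattice_add (a : ℝ) (u : ι → ℤ) (x : E) :
    periodizedGaussian b a ((∑ i, u i • b i) + x) = periodizedGaussian b a x := by
  rw [periodizedGaussian, periodizedGaussian,
    ← (Equiv.addLeft u).tsum_eq fun m => gaussian a (x + ∑ i, m i • b i)]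
  refine tsum_congr fun m => congrArg (gaussian a) ?_
  simp only [Equiv.coe_addLeft, Pi.add_apply, add_zsmul, Finset.sum_add_distrib]
  abel

theorem one_le_theta (t : ℝ) : 1 ≤ theta b t := by
  refine le_of_eq_of_le ?_ (ENNReal.le_tsum (0 : ι → ℤ))
  simp [gaussian]

theorem scaledTheta_ne_zero {t : ℝ} (ht : 0 < t) : scaledTheta b t ≠ 0 :=
  mul_ne_zero (ENNReal.ofReal_pos.2 (rpow_pos_of_pos ht _)).ne'
    (one_pos.trans_le (one_le_theta b t)).ne'

theorem toReal_theta (t : ℝ) :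
    (theta b t).toReal = ∑' m : ι → ℤ, rexp (-π * t * ‖∑ i, m i • b i‖ ^ 2) := by
  rw [theta, ENNReal.tsum_toReal_eq fun m => gaussian_ne_top _ _]
  exact tsum_congr fun m => toReal_ofReal (exp_pos _).le

variable [MeasurableSpace E] [BorelSpace E]

theorem measurable_periodizedGaussian (a : ℝ) : Measurable (periodizedGaussian b a) :=
  .tsum fun _ => (measurable_gaussian a).comp (measurable_add_const _)

theorem lintegral_eq_tsum_setLIntegral_fundamentalDomain (μ : Measure E) [μ.IsAddLeftInvariant]
    (f : E → ℝ≥0∞) :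
    ∫⁻ x, f x ∂μ
      = ∑' m : ι → ℤ, ∫⁻ x in ZSpan.fundamentalDomain b, f ((∑ i, m i • b i) + x) ∂μ := by
  have : MeasurableVAdd (span ℤ (range b)) E :=
    inferInstanceAs (MeasurableVAdd (span ℤ (range b)).toAddSubgroup E)
  have : VAddInvariantMeasure (span ℤ (range b)) E μ :=
    inferInstanceAs (VAddInvariantMeasure (span ℤ (range b)).toAddSubgroup E μ)
  rw [(ZSpan.isAddFundamentalDomain b μ).lintegral_eq_tsum'' f,
    ← (b.restrictScalars ℤ).equivFun.toEquiv.symm.tsum_eq]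
  refine tsum_congr fun m => ?_
  congr! 3 with x
  simp [Basis.equivFun_symm_apply, Basis.restrictScalars_apply, Submodule.vadd_def]

end Lattice

section Volume

variable {E : Type*} [NormedAddCommGroup E] [InnerProductSpace ℝ E] [FiniteDimensional ℝ E]
  [MeasurableSpace E] [BorelSpace E] {ι : Type*} [Fintype ι] (b : Basis ι ℝ E)

theorem setLIntegral_periodizedGaussian_mul {a c : ℝ} (hac : 0 < a + c) :
    ∫⁻ x in ZSpan.fundamentalDomain b, periodizedGaussian b a x * periodizedGaussian b c x
      = ENNReal.ofReal ((a + c) ^ (-(finrank ℝ E : ℝ) / 2)) * theta b (a * c / (a + c)) := by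
  have hunfold : ∀ x, periodizedGaussian b a x * periodizedGaussian b c x
      = ∑' m : ι → ℤ, gaussian a (x + ∑ i, m i • b i) * periodizedGaussian b c x :=
    fun x => ENNReal.tsum_mul_right.symm
  calc ∫⁻ x in ZSpan.fundamentalDomain b, periodizedGaussian b a x * periodizedGaussian b c x
      = ∑' m : ι → ℤ, ∫⁻ x in ZSpan.fundamentalDomain b,
          gaussian a (x + ∑ i, m i • b i) * periodizedGaussian b c x := by
        simp_rw [hunfold]
        exact lintegral_tsum fun m =>
          (((measurable_gaussian a).comp (measurable_add_const _)).mul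
            (measurable_periodizedGaussian b c)).aemeasurable
    _ = ∑' m : ι → ℤ, ∫⁻ x in ZSpan.fundamentalDomain b,
          gaussian a ((∑ i, m i • b i) + x) * periodizedGaussian b c ((∑ i, m i • b i) + x) := by
        simp_rw [periodizedGaussian_lattice_add, add_comm]
    _ = ∫⁻ x, gaussian a x * periodizedGaussian b c x :=
        (lintegral_eq_tsum_setLIntegral_fundamentalDomain b volume
          fun x => gaussian a x * periodizedGaussian b c x).symm
    _ = ∑' m : ι → ℤ, ∫⁻ x, gaussian a x * gaussian c (x + ∑ i, m i • b i) := by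
        simp_rw [periodizedGaussian, ← ENNReal.tsum_mul_left]
        exact lintegral_tsum fun m => ((measurable_gaussian a).mul
          ((measurable_gaussian c).comp (measurable_add_const _))).aemeasurable
    _ = ENNReal.ofReal ((a + c) ^ (-(finrank ℝ E : ℝ) / 2)) * theta b (a * c / (a + c)) := by
        simp_rw [lintegral_gaussian_mul_gaussian_add hac, ENNReal.tsum_mul_left, theta]

theorem scaledTheta_eq_setLIntegral {a c : ℝ} (ha : 0 < a) (hc : 0 < c) :
    scaledTheta b (a * c / (a + c))
      = ENNReal.ofReal ((a * c) ^ ((finrank ℝ E : ℝ) / 2))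
        * ∫⁻ x in ZSpan.fundamentalDomain b,
            periodizedGaussian b a x * periodizedGaussian b c x := by
  rw [setLIntegral_periodizedGaussian_mul b (by positivity), scaledTheta, ← mul_assoc,
    ← ENNReal.ofReal_mul (by positivity), div_rpow (by positivity) (by positivity), neg_div,
    rpow_neg (by positivity), div_eq_mul_inv]

theorem scaledTheta_sq_le {a c : ℝ} (ha : 0 < a) (hc : 0 < c) :
    scaledTheta b (a * c / (a + c)) ^ 2 ≤ scaledTheta b (a / 2) * scaledTheta b (c / 2) := by
  have hhalf : ∀ x : ℝ, x / 2 = x * x / (x + x) := fun x => by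
    rcases eq_or_ne x 0 with rfl | hx
    · simp
    · field_simp; ring
  set k := (finrank ℝ E : ℝ) / 2
  rw [hhalf a, hhalf c, scaledTheta_eq_setLIntegral b ha hc, scaledTheta_eq_setLIntegral b ha ha,
    scaledTheta_eq_setLIntegral b hc hc]
  simp_rw [← sq]
  calc _ ≤ ENNReal.ofReal ((a * c) ^ k) ^ 2
          * ((∫⁻ x in ZSpan.fundamentalDomain b, periodizedGaussian b a x ^ 2)
            * ∫⁻ x in ZSpan.fundamentalDomain b, periodizedGaussian b c x ^ 2) := by
        rw [mul_pow]
        gcongr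
        exact lintegral_mul_sq_le (measurable_periodizedGaussian b a).aemeasurable
          (measurable_periodizedGaussian b c).aemeasurable
    _ = _ := by
        rw [← ENNReal.ofReal_pow (by positivity), mul_rpow ha.le hc.le, mul_pow,
          rpow_pow_comm ha.le, rpow_pow_comm hc.le, ENNReal.ofReal_mul (by positivity)]
        ring

theorem theta_mul_volume_le {t d : ℝ} (ht : 0 < t)
    (hd : ∀ y ∈ ZSpan.fundamentalDomain b, ‖y‖ ≤ d) :
    theta b t * volume (ZSpan.fundamentalDomain b)
      ≤ ENNReal.ofReal (rexp (π * t * d ^ 2) * (t / 2) ^ (-(finrank ℝ E : ℝ) / 2)) := by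
  set C := ENNReal.ofReal (rexp (π * t * d ^ 2))
  calc theta b t * volume (ZSpan.fundamentalDomain b)
      = ∑' m : ι → ℤ, ∫⁻ _ in ZSpan.fundamentalDomain b, gaussian t (∑ i, m i • b i) := by
        simp_rw [theta, ← ENNReal.tsum_mul_right, setLIntegral_const]
    _ ≤ ∑' m : ι → ℤ, ∫⁻ y in ZSpan.fundamentalDomain b,
          C * gaussian (t / 2) ((∑ i, m i • b i) + y) :=
        ENNReal.tsum_le_tsum fun m => setLIntegral_mono
          (((measurable_gaussian _).comp (measurable_const_add _)).const_mul C)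
          fun y hy => gaussian_le_mul_gaussian_add ht.le _ (hd y hy)
    _ = C * ∫⁻ y, gaussian (t / 2) y := by
        rw [lintegral_eq_tsum_setLIntegral_fundamentalDomain b, ← ENNReal.tsum_mul_left]
        exact tsum_congr fun m => lintegral_const_mul' _ _ ofReal_ne_top
    _ = _ := by rw [lintegral_gaussian (by positivity), ← ENNReal.ofReal_mul (exp_pos _).le]

theorem theta_ne_top {t : ℝ} (ht : 0 < t) : theta b t ≠ ∞ := by
  obtain ⟨d, hd⟩ := isBounded_iff_forall_norm_le.1 (ZSpan.fundamentalDomain_isBounded b)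
  intro htop
  have h := theta_mul_volume_le b ht hd
  rw [htop, top_mul (ZSpan.measure_fundamentalDomain_ne_zero b)] at h
  exact ofReal_ne_top (top_le_iff.1 h)

theorem scaledTheta_ne_top {t : ℝ} (ht : 0 < t) : scaledTheta b t ≠ ∞ :=
  mul_ne_top ofReal_ne_top (theta_ne_top b ht)

theorem scaledTheta_mul_volume_le {t d : ℝ} (ht : 0 < t)
    (hd : ∀ y ∈ ZSpan.fundamentalDomain b, ‖y‖ ≤ d) :
    scaledTheta b t * volume (ZSpan.fundamentalDomain b)
      ≤ ENNReal.ofReal (2 ^ ((finrank ℝ E : ℝ) / 2) * rexp (π * t * d ^ 2)) := by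
  rw [scaledTheta, mul_assoc]
  refine (mul_le_mul_right (theta_mul_volume_le b ht hd) _).trans_eq ?_
  rw [← ENNReal.ofReal_mul (by positivity), neg_div, rpow_neg (by positivity),
    div_rpow ht.le zero_le_two]
  congr 1
  field_simp

theorem exists_forall_scaledTheta_le (t₀ : ℝ) :
    ∃ C ≠ ∞, ∀ t ∈ Ioc 0 t₀, scaledTheta b t ≤ C := by
  obtain ⟨d, hd⟩ := isBounded_iff_forall_norm_le.1 (ZSpan.fundamentalDomain_isBounded b)
  have hvol₀ := ZSpan.measure_fundamentalDomain_ne_zero b (μ := volume)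
  have hvol := (ZSpan.fundamentalDomain_isBounded b).measure_lt_top (μ := volume)
  refine ⟨ENNReal.ofReal (2 ^ ((finrank ℝ E : ℝ) / 2) * rexp (π * t₀ * d ^ 2))
    / volume (ZSpan.fundamentalDomain b), div_ne_top ofReal_ne_top hvol₀, fun t ht => ?_⟩
  rw [ENNReal.le_div_iff_mul_le (.inl hvol₀) (.inl hvol.ne)]
  refine (scaledTheta_mul_volume_le b ht.1 hd).trans (ENNReal.ofReal_le_ofReal ?_)
  gcongr
  exact ht.2

theorem monotoneOn_scaledTheta : MonotoneOn (scaledTheta b) (Ioi 0) := by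
  have hanti : AntitoneOn (fun p => (scaledTheta b p⁻¹).toReal) (Ioi 0) := by
    refine antitoneOn_of_sq_midpoint_le_of_bddAbove (fun p hp => ?_) (fun p q hp hq => ?_)
      (fun p hp => ?_)
    · exact toReal_pos (scaledTheta_ne_zero b (inv_pos.2 hp))
        (scaledTheta_ne_top b (inv_pos.2 hp))
    · have h := scaledTheta_sq_le b (a := 2 / p) (c := 2 / q) (by positivity) (by positivity)
      rw [show 2 / p * (2 / q) / (2 / p + 2 / q) = ((p + q) / 2)⁻¹ by field_simp; ring,
        show 2 / p / 2 = p⁻¹ by ring, show 2 / q / 2 = q⁻¹ by ring] at h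
      rw [← toReal_pow, ← toReal_mul]
      exact toReal_mono (mul_ne_top (scaledTheta_ne_top b (inv_pos.2 hp))
        (scaledTheta_ne_top b (inv_pos.2 hq))) h
    · obtain ⟨C, hC, hle⟩ := exists_forall_scaledTheta_le b p⁻¹
      exact ⟨C.toReal, forall_mem_image.2 fun u hu =>
        toReal_mono hC (hle _ ⟨inv_pos.2 (hp.trans_le hu), inv_anti₀ hp hu⟩)⟩
  intro s hs t ht hst
  have h := hanti (mem_Ioi.2 (inv_pos.2 ht)) (mem_Ioi.2 (inv_pos.2 hs)) (inv_anti₀ hs hst)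
  simp only [inv_inv] at h
  exact (toReal_le_toReal (scaledTheta_ne_top b hs) (scaledTheta_ne_top b ht)).1 h

end Volume

end LatticeTheta

open LatticeTheta in
theorem log_theta_add_half_rank_log_monotone
    {V : Type*} [NormedAddCommGroup V] [InnerProductSpace ℝ V]
    {n : ℕ} (b : Module.Basis (Fin n) ℝ V) :
    ∀ s t : ℝ, 0 < s → s ≤ t →
      Real.log (∑' m : Fin n → ℤ, Real.exp (-Real.pi * s * ‖∑ i, m i • b i‖ ^ 2))
          + (n / 2 : ℝ) * Real.log s
        ≤ Real.log (∑' m : Fin n → ℤ, Real.exp (-Real.pi * t * ‖∑ i, m i • b i‖ ^ 2))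
          + (n / 2 : ℝ) * Real.log t := by
  intro s t hs hst
  let _ : MeasurableSpace V := borel V
  have : BorelSpace V := ⟨rfl⟩
  have : FiniteDimensional ℝ V := b.finiteDimensional_of_finite
  have hrank : (finrank ℝ V : ℝ) = n := by rw [finrank_eq_card_basis b, Fintype.card_fin]
  have hlog : ∀ u, 0 < u → Real.log (∑' m : Fin n → ℤ, rexp (-π * u * ‖∑ i, m i • b i‖ ^ 2))
      + (n / 2 : ℝ) * Real.log u = Real.log (scaledTheta b u).toReal := by
    intro u hu
    have hθ : 0 < (theta b u).toReal :=
      toReal_pos (one_pos.trans_le (one_le_theta b u)).ne' (theta_ne_top b hu)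
    rw [scaledTheta, toReal_mul, toReal_ofReal (rpow_nonneg hu.le _),
      Real.log_mul (rpow_pos_of_pos hu _).ne' hθ.ne', Real.log_rpow hu, hrank, toReal_theta]
    ring
  have ht := hs.trans_le hst
  rw [hlog s hs, hlog t ht]
  exact Real.log_le_log (toReal_pos (scaledTheta_ne_zero b hs) (scaledTheta_ne_top b hs))
    (toReal_mono (scaledTheta_ne_top b ht) (monotoneOn_scaledTheta b hs ht hst))
end

section
/- Let L be a full-rank lattice of rank n in a Euclidean space. For every t > 0, ∑_{v∈L} ‖v‖² e^{-πt‖v‖²} ≤ (n/(2πt)) · ∑_{v∈L} e^{-πt‖v‖²}. -/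
/-!
Write `ρ(x) = ∑ₘ exp (-π t ‖v_m + x‖²)` for the Gaussian mass of the shifted lattice, `v_m` the
lattice point with coordinates `m`. Instead of Poisson summation, two elementary facts are used.

First, `ρ` is maximal at `0`. Splitting `ℤⁿ` into the `2ⁿ` parity classes, the parallelogram law
turns `(v, w) ↦ (v + w, v - w)` into a bijection onto pairs of equal parity, which gives
`ρ(x) ρ(y) = ∑_c P_c(x + y) P_c(x - y)` with `P_c` the partial sums over a class at half the scale.
Cauchy–Schwarz then yields `ρ(x)⁴ ≤ ρ(2x) ρ(0)³`, and since `ρ` is bounded (it is periodic),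
iterating `x ↦ 2x` forces `ρ(x) ≤ ρ(0)`.

Second, at a maximum the second derivative is nonpositive: expanding `ρ(y) + ρ(-y) ≤ 2 ρ(0)` with
`cosh θ ≥ 1 + θ² / 2` bounds `∑ₘ ⟪v_m, u⟫² exp (-π t ‖v_m‖²)` by `‖u‖² ρ(0) / (2π t)`. Summing
over an orthonormal basis gives the theorem.
-/

open Real Filter Topology Module
open scoped RealInnerProductSpace

lemma one_add_sq_div_two_le_cosh (r : ℝ) : 1 + r ^ 2 / 2 ≤ cosh r := by
  simpa [Finset.sum_range_succ] using
    sum_le_hasSum (Finset.range 2)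
      (fun n _ => div_nonneg ((even_two_mul n).pow_nonneg r) (by positivity)) (hasSum_cosh r)

-- Compare the right derivatives at `0` of `A + B * x ≤ A * exp (c * x)`.
lemma le_mul_of_forall_exp_neg_mul_le {A B c : ℝ}
    (h : ∀ x > 0, exp (-(c * x)) * (A + B * x) ≤ A) : B ≤ c * A := by
  have hderiv : HasDerivAt (fun x => A * exp (c * x)) (c * A) 0 := by
    simpa [mul_comm] using (((hasDerivAt_id (0 : ℝ)).const_mul c).exp).const_mul A
  have hslope := hderiv.tendsto_slope_zero_right
  refine ge_of_tendsto hslope ?_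
  filter_upwards [self_mem_nhdsWithin] with x (hx : 0 < x)
  have hA : A + B * x ≤ A * exp (c * x) := by
    have := mul_le_mul_of_nonneg_left (h x hx) (exp_pos (c * x)).le
    rw [← mul_assoc, ← exp_add, add_neg_cancel, exp_zero, one_mul] at this
    linarith
  simp only [zero_add, mul_zero, exp_zero, mul_one, smul_eq_mul]
  rw [inv_mul_eq_div, le_div_iff₀ hx]
  linarith

lemma summable_pi_prod_of_nonneg {ι κ : Type*} [Fintype ι] {f : ι → κ → ℝ}
    (hf₀ : ∀ i k, 0 ≤ f i k) (hf : ∀ i, Summable (f i)) :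
    Summable fun m : ι → κ => ∏ i, f i (m i) := by
  classical
  refine summable_of_sum_le (c := ∏ i, ∑' k, f i k)
    (fun m => Finset.prod_nonneg fun i _ => hf₀ i (m i)) fun s => ?_
  calc ∑ m ∈ s, ∏ i, f i (m i)
      ≤ ∑ m ∈ Fintype.piFinset fun i => s.image (· i), ∏ i, f i (m i) :=
        Finset.sum_le_sum_of_subset_of_nonneg
          (fun m hm => Fintype.mem_piFinset.2 fun i => Finset.mem_image_of_mem _ hm)
          (fun m _ _ => Finset.prod_nonneg fun i _ => hf₀ i (m i))
    _ = ∏ i, ∑ k ∈ s.image (· i), f i k := (Finset.prod_univ_sum _ _).symm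
    _ ≤ ∏ i, ∑' k, f i k :=
        Finset.prod_le_prod (fun i _ => Finset.sum_nonneg fun k _ => hf₀ i k)
          fun i _ => (hf i).sum_le_tsum _ fun k _ => hf₀ i k

lemma summable_exp_neg_mul_int_sq {a : ℝ} (ha : 0 < a) :
    Summable fun k : ℤ => exp (-a * k ^ 2) := by
  have := summable_pow_mul_jacobiTheta₂_term_bound 0 (div_pos ha pi_pos) 0
  simp only [pow_zero, one_mul, mul_zero, zero_mul, sub_zero] at this
  convert this using 3 with k
  field_simp

lemma le_one_of_pow_le_comp {α : Type*} {f : α → ℝ} {T : α → α} {p : ℕ} (hp : 1 < p)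
    (hf : BddAbove (Set.range f)) (h : ∀ x, f x ^ p ≤ f (T x)) (x : α) : f x ≤ 1 := by
  by_contra! hx
  obtain ⟨C, hC⟩ := hf
  have hiter : ∀ k, f x ^ p ^ k ≤ f (T^[k] x) := by
    intro k
    induction k with
    | zero => simp
    | succ k ih =>
      rw [pow_succ, pow_mul, Function.iterate_succ_apply']
      exact (pow_le_pow_left₀ (by positivity) ih p).trans (h _)
  obtain ⟨k, hk⟩ := pow_unbounded_of_one_lt C hx
  have := calc f x ^ k ≤ f x ^ p ^ k := pow_le_pow_right₀ hx.le (Nat.lt_pow_self hp).le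
    _ ≤ f (T^[k] x) := hiter k
    _ ≤ C := hC ⟨_, rfl⟩
  linarith

noncomputable def gaussian {V : Type*} [Norm V] (s : ℝ) (v : V) : ℝ := exp (-π * s * ‖v‖ ^ 2)

section SeminormedAddCommGroup
variable {V : Type*} [SeminormedAddCommGroup V]

lemma gaussian_pos (s : ℝ) (v : V) : 0 < gaussian s v := exp_pos _

lemma gaussian_add_le {s : ℝ} (hs : 0 ≤ s) (a z : V) :
    gaussian s (a + z) ≤ exp (π * s * ‖z‖ ^ 2) * gaussian (s / 2) a := by
  rw [gaussian, gaussian, ← exp_add]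
  gcongr exp ?_
  have htri : ‖a‖ ≤ ‖a + z‖ + ‖z‖ := by simpa using norm_add_le (a + z) (-z)
  have hsq : ‖a‖ ^ 2 ≤ 2 * ‖a + z‖ ^ 2 + 2 * ‖z‖ ^ 2 := by
    nlinarith [norm_nonneg a, sq_nonneg (‖a + z‖ - ‖z‖)]
  nlinarith [mul_le_mul_of_nonneg_left hsq (mul_nonneg pi_pos.le hs)]

lemma sq_norm_mul_gaussian_le {s : ℝ} (hs : 0 < s) (v : V) :
    ‖v‖ ^ 2 * gaussian s v ≤ 2 / (π * s) * gaussian (s / 2) v := by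
  have hπs : 0 < π * s := by positivity
  have hexp := add_one_le_exp (π * s / 2 * ‖v‖ ^ 2)
  have hsplit : gaussian s v = exp (-(π * s / 2 * ‖v‖ ^ 2)) * gaussian (s / 2) v := by
    rw [gaussian, gaussian, ← exp_add]
    ring_nf
  rw [hsplit, ← mul_assoc]
  gcongr
  · exact (gaussian_pos _ _).le
  rw [exp_neg, ← div_eq_mul_inv, div_le_div_iff₀ (exp_pos _) hπs]
  nlinarith

end SeminormedAddCommGroup

section InnerProductSpace
variable {V : Type*} [NormedAddCommGroup V] [InnerProductSpace ℝ V]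

lemma gaussian_mul_gaussian (s : ℝ) (a b : V) :
    gaussian s a * gaussian s b = gaussian (s / 2) (a + b) * gaussian (s / 2) (a - b) := by
  simp only [gaussian, ← exp_add]
  congr 1
  linear_combination (π * s / 2) * parallelogram_law_with_norm ℝ a b

lemma exp_mul_two_add_sq_mul_gaussian_le (s : ℝ) (a y : V) :
    exp (-π * s * ‖y‖ ^ 2) * (2 + (2 * π * s * ⟪a, y⟫) ^ 2) * gaussian s a ≤
      gaussian s (a + y) + gaussian s (a - y) := by
  have hsum : gaussian s (a + y) + gaussian s (a - y) =
      exp (-π * s * ‖y‖ ^ 2) * (2 * cosh (2 * π * s * ⟪a, y⟫)) * gaussian s a := by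
    simp only [gaussian, cosh_eq, norm_add_sq_real, norm_sub_sq_real]
    simp only [mul_add, add_mul, mul_div_cancel₀ _ (two_ne_zero' ℝ), ← exp_add]
    ring_nf
  rw [hsum]
  gcongr
  · exact (gaussian_pos _ _).le
  linarith [one_add_sq_div_two_le_cosh (2 * π * s * ⟪a, y⟫)]

end InnerProductSpace

def parity {ι : Type*} (m : ι → ℤ) : ι → ZMod 2 := fun i => m i

section parity
variable {ι : Type*}

lemma parity_add_eq_parity_sub (v w : ι → ℤ) : parity (v + w) = parity (v - w) := by
  funext i
  simp only [parity, Pi.add_apply, Pi.sub_apply, Int.cast_add, Int.cast_sub, CharTwo.sub_eq_add]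

lemma add_sub_injective :
    Function.Injective fun vw : (ι → ℤ) × (ι → ℤ) => (vw.1 + vw.2, vw.1 - vw.2) := by
  rintro ⟨v, w⟩ ⟨v', w'⟩ h
  simp only [Prod.mk.injEq, funext_iff, Pi.add_apply, Pi.sub_apply] at h
  obtain ⟨hadd, hsub⟩ := h
  simp only [Prod.mk.injEq, funext_iff]
  constructor <;> intro i <;> have := hadd i <;> have := hsub i <;> omega

lemma mem_range_add_sub_of_parity_eq {p q : ι → ℤ} (h : parity p = parity q) :
    (p, q) ∈ Set.range fun vw : (ι → ℤ) × (ι → ℤ) => (vw.1 + vw.2, vw.1 - vw.2) := by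
  have hdvd : ∀ i, ((2 : ℕ) : ℤ) ∣ q i - p i := fun i =>
    (ZMod.intCast_eq_intCast_iff_dvd_sub _ _ 2).1 (congrFun h i)
  refine ⟨(fun i => (p i + q i) / 2, fun i => (p i - q i) / 2), ?_⟩
  simp only [Prod.mk.injEq, funext_iff, Pi.add_apply, Pi.sub_apply]
  constructor <;> intro i <;> have := hdvd i <;> omega

end parity

namespace Module.Basis

section NormedSpace

variable {ι V : Type*} [Fintype ι] [NormedAddCommGroup V] [NormedSpace ℝ V] (b : Basis ι ℝ V)

lemma exists_sum_repr_sq_le :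
    ∃ C > 0, ∀ v, ∑ i, b.repr v i ^ 2 ≤ C * ‖v‖ ^ 2 := by
  have : FiniteDimensional ℝ V := b.finiteDimensional_of_finite
  set K := ‖(b.equivFun.toContinuousLinearEquiv : V →L[ℝ] ι → ℝ)‖
  refine ⟨Fintype.card ι * K ^ 2 + 1, by positivity, fun v => ?_⟩
  have hcoord : ∀ i, b.repr v i ^ 2 ≤ K ^ 2 * ‖v‖ ^ 2 := fun i => by
    rw [← mul_pow, ← sq_abs]
    refine pow_le_pow_left₀ (abs_nonneg _) ?_ 2
    calc |b.repr v i| = ‖b.equivFun v i‖ := by simp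
      _ ≤ ‖b.equivFun v‖ := norm_le_pi_norm _ i
      _ ≤ K * ‖v‖ := (b.equivFun.toContinuousLinearEquiv : V →L[ℝ] ι → ℝ).le_opNorm v
  calc ∑ i, b.repr v i ^ 2 ≤ ∑ _i : ι, K ^ 2 * ‖v‖ ^ 2 := Finset.sum_le_sum fun i _ => hcoord i
    _ ≤ (Fintype.card ι * K ^ 2 + 1) * ‖v‖ ^ 2 := by
      rw [Finset.sum_const, Finset.card_univ, nsmul_eq_mul]
      nlinarith [sq_nonneg ‖v‖]

noncomputable def latticePoint : (ι → ℤ) →+ V := (Fintype.linearCombination ℤ b).toAddMonoidHom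

lemma latticePoint_apply (m : ι → ℤ) : b.latticePoint m = ∑ i, m i • b i := rfl

lemma repr_latticePoint (m : ι → ℤ) (i : ι) : b.repr (b.latticePoint m) i = m i := by
  simp only [latticePoint_apply, ← Int.cast_smul_eq_zsmul ℝ, repr_sum_self]

lemma summable_gaussian_latticePoint {s : ℝ} (hs : 0 < s) :
    Summable fun m => gaussian s (b.latticePoint m) := by
  obtain ⟨C, hC, hrepr⟩ := b.exists_sum_repr_sq_le
  have hprod := summable_pi_prod_of_nonneg (f := fun (_ : ι) (k : ℤ) => exp (-(π * s / C) * k ^ 2))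
    (fun _ _ => (exp_pos _).le) fun _ => summable_exp_neg_mul_int_sq (by positivity)
  refine hprod.of_nonneg_of_le (fun _ => (gaussian_pos _ _).le) fun m => ?_
  have hsq := hrepr (b.latticePoint m)
  simp only [repr_latticePoint] at hsq
  rw [gaussian, ← exp_sum, ← Finset.mul_sum]
  gcongr exp ?_
  calc -π * s * ‖b.latticePoint m‖ ^ 2 = -(π * s / C) * (C * ‖b.latticePoint m‖ ^ 2) := by
        field_simp
    _ ≤ -(π * s / C) * ∑ i, (m i : ℝ) ^ 2 :=
        mul_le_mul_of_nonpos_left hsq (neg_nonpos.2 (by positivity))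

lemma summable_gaussian_latticePoint_add {s : ℝ} (hs : 0 < s) (x : V) :
    Summable fun m => gaussian s (b.latticePoint m + x) :=
  ((b.summable_gaussian_latticePoint (half_pos hs)).mul_left _).of_nonneg_of_le
    (fun _ => (gaussian_pos _ _).le) fun _ => gaussian_add_le hs.le _ _

noncomputable def gaussianSum (s : ℝ) (x : V) : ℝ := ∑' m, gaussian s (b.latticePoint m + x)

lemma gaussianSum_zero (s : ℝ) : b.gaussianSum s 0 = ∑' m, gaussian s (b.latticePoint m) := by
  simp only [gaussianSum, add_zero]

lemma gaussianSum_nonneg (s : ℝ) (x : V) : 0 ≤ b.gaussianSum s x :=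
  tsum_nonneg fun _ => (gaussian_pos _ _).le

lemma gaussianSum_pos {s : ℝ} (hs : 0 < s) (x : V) : 0 < b.gaussianSum s x :=
  (b.summable_gaussian_latticePoint_add hs x).tsum_pos (fun _ => (gaussian_pos _ _).le) 0
    (gaussian_pos _ _)

lemma gaussianSum_add_latticePoint (s : ℝ) (x : V) (k : ι → ℤ) :
    b.gaussianSum s (x + b.latticePoint k) = b.gaussianSum s x := by
  rw [gaussianSum, gaussianSum,
    ← (Equiv.addRight k).tsum_eq fun m => gaussian s (b.latticePoint m + x)]
  refine tsum_congr fun m => ?_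
  rw [Equiv.coe_addRight, map_add, add_right_comm, add_assoc]

lemma gaussianSum_le_exp_mul {s : ℝ} (hs : 0 < s) (z : V) :
    b.gaussianSum s z ≤ exp (π * s * ‖z‖ ^ 2) * b.gaussianSum (s / 2) 0 := by
  rw [gaussianSum_zero, ← tsum_mul_left]
  exact (b.summable_gaussian_latticePoint_add hs z).tsum_le_tsum
    (fun _ => gaussian_add_le hs.le _ _)
    ((b.summable_gaussian_latticePoint (half_pos hs)).mul_left _)

lemma bddAbove_range_gaussianSum {s : ℝ} (hs : 0 < s) : BddAbove (Set.range (b.gaussianSum s)) := by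
  refine ⟨exp (π * s * (∑ i, ‖b i‖) ^ 2) * b.gaussianSum (s / 2) 0, ?_⟩
  rintro _ ⟨x, rfl⟩
  obtain ⟨k, hk⟩ := (Submodule.mem_span_range_iff_exists_fun ℤ).1 (ZSpan.floor b x).2
  have hx : x = ZSpan.fract b x + b.latticePoint k := by
    rw [latticePoint_apply, hk, ZSpan.fract_apply, sub_add_cancel]
  rw [hx, gaussianSum_add_latticePoint]
  refine (b.gaussianSum_le_exp_mul hs _).trans ?_
  gcongr
  · exact b.gaussianSum_nonneg _ _
  · exact ZSpan.norm_fract_le b x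

end NormedSpace

section InnerProductSpace

variable {ι V : Type*} [Fintype ι] [NormedAddCommGroup V] [InnerProductSpace ℝ V]
  (b : Basis ι ℝ V)

noncomputable def parityGaussianSum (s : ℝ) (x : V) (c : ι → ZMod 2) : ℝ :=
  ∑' m, {m | parity m = c}.indicator (fun m => gaussian s (b.latticePoint m + x)) m

lemma sum_parityGaussianSum_mul [DecidableEq ι] {s : ℝ} (hs : 0 < s) (x y : V) :
    ∑ c, b.parityGaussianSum s x c * b.parityGaussianSum s y c =
      ∑' pq : (ι → ℤ) × (ι → ℤ), if parity pq.1 = parity pq.2 then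
        gaussian s (b.latticePoint pq.1 + x) * gaussian s (b.latticePoint pq.2 + y) else 0 := by
  have hsum (z : V) (c : ι → ZMod 2) :=
    (b.summable_gaussian_latticePoint_add hs z).indicator {m | parity m = c}
  have hnonneg (z : V) (c : ι → ZMod 2) (m : ι → ℤ) :
      0 ≤ {m | parity m = c}.indicator (fun m => gaussian s (b.latticePoint m + z)) m :=
    Set.indicator_nonneg (fun _ _ => (gaussian_pos _ _).le) m
  have hpair (c : ι → ZMod 2) := (hsum x c).mul_of_nonneg (hsum y c) (hnonneg x c) (hnonneg y c)
  simp only [parityGaussianSum, fun c => (hsum x c).tsum_mul_tsum (hsum y c) (hpair c)]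
  rw [← Summable.tsum_finsetSum fun c _ => hpair c]
  refine tsum_congr fun pq => ?_
  simp [Set.indicator_apply, ite_mul, Finset.sum_ite_eq', eq_comm]

lemma gaussianSum_mul_gaussianSum [DecidableEq ι] {s : ℝ} (hs : 0 < s) (x y : V) :
    b.gaussianSum s x * b.gaussianSum s y =
      ∑ c, b.parityGaussianSum (s / 2) (x + y) c * b.parityGaussianSum (s / 2) (x - y) c := by
  have hx := b.summable_gaussian_latticePoint_add hs x
  have hy := b.summable_gaussian_latticePoint_add hs y
  have hxy := hx.mul_of_nonneg hy (fun _ => (gaussian_pos _ _).le) fun _ => (gaussian_pos _ _).le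
  have hsupp : Function.support (fun pq : (ι → ℤ) × (ι → ℤ) =>
      if parity pq.1 = parity pq.2 then gaussian (s / 2) (b.latticePoint pq.1 + (x + y)) *
        gaussian (s / 2) (b.latticePoint pq.2 + (x - y)) else 0) ⊆
      Set.range fun vw : (ι → ℤ) × (ι → ℤ) => (vw.1 + vw.2, vw.1 - vw.2) := fun pq hpq =>
    mem_range_add_sub_of_parity_eq (by_contra fun h => hpq (if_neg h))
  rw [b.sum_parityGaussianSum_mul (half_pos hs), ← add_sub_injective.tsum_eq hsupp, gaussianSum,
    gaussianSum, hx.tsum_mul_tsum hy hxy]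
  refine tsum_congr fun vw => ?_
  rw [if_pos (parity_add_eq_parity_sub _ _), gaussian_mul_gaussian]
  simp only [map_add, map_sub]
  congr 2 <;> abel

lemma gaussianSum_pow_four_le {s : ℝ} (hs : 0 < s) (x : V) :
    b.gaussianSum s x ^ 4 ≤ b.gaussianSum s (x + x) * b.gaussianSum s 0 ^ 3 := by
  classical
  have hxx := b.gaussianSum_mul_gaussianSum hs x x
  have h2x0 := b.gaussianSum_mul_gaussianSum hs (x + x) 0
  have h00 := b.gaussianSum_mul_gaussianSum hs 0 0
  simp only [sub_self, add_zero, sub_zero] at hxx h2x0 h00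
  calc b.gaussianSum s x ^ 4 = (b.gaussianSum s x * b.gaussianSum s x) ^ 2 := by ring
    _ ≤ (∑ c, b.parityGaussianSum (s / 2) (x + x) c ^ 2) *
          ∑ c, b.parityGaussianSum (s / 2) 0 c ^ 2 := by
      rw [hxx]
      exact Finset.sum_mul_sq_le_sq_mul_sq _ _ _
    _ = b.gaussianSum s (x + x) * b.gaussianSum s 0 ^ 3 := by
      simp only [sq, ← h2x0, ← h00]
      ring

lemma gaussianSum_le_gaussianSum_zero {s : ℝ} (hs : 0 < s) (x : V) :
    b.gaussianSum s x ≤ b.gaussianSum s 0 := by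
  have hpos := b.gaussianSum_pos hs 0
  suffices b.gaussianSum s x / b.gaussianSum s 0 ≤ 1 by rwa [div_le_one hpos] at this
  refine le_one_of_pow_le_comp (f := fun y => b.gaussianSum s y / b.gaussianSum s 0)
    (T := fun y => y + y) (p := 4) (by norm_num) ?_ (fun y => ?_) x
  · obtain ⟨C, hC⟩ := b.bddAbove_range_gaussianSum hs
    refine ⟨C / b.gaussianSum s 0, ?_⟩
    rintro _ ⟨y, rfl⟩
    exact div_le_div_of_nonneg_right (hC ⟨y, rfl⟩) hpos.le
  · rw [div_pow, div_le_div_iff₀ (by positivity) hpos]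
    calc b.gaussianSum s y ^ 4 * b.gaussianSum s 0
        ≤ b.gaussianSum s (y + y) * b.gaussianSum s 0 ^ 3 * b.gaussianSum s 0 := by
          gcongr
          exact b.gaussianSum_pow_four_le hs y
      _ = b.gaussianSum s (y + y) * b.gaussianSum s 0 ^ 4 := by ring

lemma summable_sq_inner_mul_gaussian {s : ℝ} (hs : 0 < s) (u : V) :
    Summable fun m => ⟪b.latticePoint m, u⟫ ^ 2 * gaussian s (b.latticePoint m) := by
  refine ((b.summable_gaussian_latticePoint (half_pos hs)).mul_left (‖u‖ ^ 2 * (2 / (π * s)))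
    ).of_nonneg_of_le (fun m => mul_nonneg (sq_nonneg _) (gaussian_pos s (b.latticePoint m)).le)
    fun m => ?_
  have hinner : ⟪b.latticePoint m, u⟫ ^ 2 ≤ ‖u‖ ^ 2 * ‖b.latticePoint m‖ ^ 2 := by
    rw [← mul_pow, ← sq_abs, mul_comm]
    exact pow_le_pow_left₀ (abs_nonneg _) (abs_real_inner_le_norm _ _) 2
  calc ⟪b.latticePoint m, u⟫ ^ 2 * gaussian s (b.latticePoint m)
      ≤ ‖u‖ ^ 2 * (‖b.latticePoint m‖ ^ 2 * gaussian s (b.latticePoint m)) := by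
        rw [← mul_assoc]
        exact mul_le_mul_of_nonneg_right hinner (gaussian_pos _ _).le
    _ ≤ ‖u‖ ^ 2 * (2 / (π * s) * gaussian (s / 2) (b.latticePoint m)) :=
        mul_le_mul_of_nonneg_left (sq_norm_mul_gaussian_le hs _) (sq_nonneg _)
    _ = _ := by ring

lemma exp_mul_two_mul_gaussianSum_add_le {s : ℝ} (hs : 0 < s) (y : V) :
    exp (-π * s * ‖y‖ ^ 2) * (2 * b.gaussianSum s 0 +
        (2 * π * s) ^ 2 * ∑' m, ⟪b.latticePoint m, y⟫ ^ 2 * gaussian s (b.latticePoint m)) ≤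
      2 * b.gaussianSum s 0 := by
  set e := exp (-π * s * ‖y‖ ^ 2)
  have hg := b.summable_gaussian_latticePoint hs
  have hy := b.summable_sq_inner_mul_gaussian hs y
  calc e * (2 * b.gaussianSum s 0 +
        (2 * π * s) ^ 2 * ∑' m, ⟪b.latticePoint m, y⟫ ^ 2 * gaussian s (b.latticePoint m))
      = ∑' m, e * (2 + (2 * π * s * ⟪b.latticePoint m, y⟫) ^ 2) *
          gaussian s (b.latticePoint m) := by
        rw [gaussianSum_zero, ← tsum_mul_left, ← tsum_mul_left, ← Summable.tsum_add
          (hg.mul_left 2) (hy.mul_left _), ← tsum_mul_left]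
        exact tsum_congr fun m => by ring
    _ ≤ ∑' m, (gaussian s (b.latticePoint m + y) + gaussian s (b.latticePoint m - y)) :=
        Summable.tsum_le_tsum (fun m => exp_mul_two_add_sq_mul_gaussian_le s _ y)
          (((hg.mul_left 2).add (hy.mul_left ((2 * π * s) ^ 2))).mul_left e |>.congr
            fun m => by ring)
          ((b.summable_gaussian_latticePoint_add hs y).add
            (by simpa only [sub_eq_add_neg] using b.summable_gaussian_latticePoint_add hs (-y)))
    _ = b.gaussianSum s y + b.gaussianSum s (-y) := by
        simp only [sub_eq_add_neg]
        exact (b.summable_gaussian_latticePoint_add hs y).tsum_add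
          (b.summable_gaussian_latticePoint_add hs (-y))
    _ ≤ 2 * b.gaussianSum s 0 := by
        linarith [b.gaussianSum_le_gaussianSum_zero hs y, b.gaussianSum_le_gaussianSum_zero hs (-y)]

lemma tsum_sq_inner_mul_gaussian_le {s : ℝ} (hs : 0 < s) (u : V) :
    ∑' m, ⟪b.latticePoint m, u⟫ ^ 2 * gaussian s (b.latticePoint m) ≤
      ‖u‖ ^ 2 / (2 * π * s) * b.gaussianSum s 0 := by
  set S := ∑' m, ⟪b.latticePoint m, u⟫ ^ 2 * gaussian s (b.latticePoint m)
  have key : (2 * π * s) ^ 2 * S ≤ π * s * ‖u‖ ^ 2 * (2 * b.gaussianSum s 0) := by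
    refine le_mul_of_forall_exp_neg_mul_le fun t ht => ?_
    have hscale : ∑' m, ⟪b.latticePoint m, √t • u⟫ ^ 2 * gaussian s (b.latticePoint m) = t * S := by
      rw [← tsum_mul_left]
      refine tsum_congr fun m => ?_
      rw [real_inner_smul_right, mul_pow, sq_sqrt ht.le, mul_assoc]
    have hnorm : ‖√t • u‖ ^ 2 = t * ‖u‖ ^ 2 := by
      rw [_root_.norm_smul, mul_pow, norm_eq_abs, sq_abs, sq_sqrt ht.le]
    have := b.exp_mul_two_mul_gaussianSum_add_le hs (√t • u)
    rw [hscale, hnorm] at this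
    convert this using 3 <;> ring
  have h2πs : 0 < 2 * π * s := by positivity
  rw [div_mul_eq_mul_div, le_div_iff₀ h2πs]
  refine le_of_mul_le_mul_left ?_ h2πs
  linear_combination key

lemma tsum_sq_norm_mul_gaussian_le {s : ℝ} (hs : 0 < s) :
    ∑' m, ‖b.latticePoint m‖ ^ 2 * gaussian s (b.latticePoint m) ≤
      Fintype.card ι / (2 * π * s) * b.gaussianSum s 0 := by
  have : FiniteDimensional ℝ V := b.finiteDimensional_of_finite
  set e := stdOrthonormalBasis ℝ V
  calc ∑' m, ‖b.latticePoint m‖ ^ 2 * gaussian s (b.latticePoint m)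
      = ∑' m, ∑ j, ⟪b.latticePoint m, e j⟫ ^ 2 * gaussian s (b.latticePoint m) := by
        simp only [← Finset.sum_mul, e.sum_sq_inner_left]
    _ = ∑ j, ∑' m, ⟪b.latticePoint m, e j⟫ ^ 2 * gaussian s (b.latticePoint m) :=
        Summable.tsum_finsetSum fun j _ => b.summable_sq_inner_mul_gaussian hs (e j)
    _ ≤ ∑ j, ‖e j‖ ^ 2 / (2 * π * s) * b.gaussianSum s 0 :=
        Finset.sum_le_sum fun j _ => b.tsum_sq_inner_mul_gaussian_le hs (e j)
    _ = Fintype.card ι / (2 * π * s) * b.gaussianSum s 0 := by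
        simp only [e.orthonormal.1, one_pow, Finset.sum_const, Finset.card_univ, Fintype.card_fin,
          nsmul_eq_mul, finrank_eq_card_basis b]
        ring

end InnerProductSpace

end Module.Basis

theorem weighted_gaussian_sum_le
    {V : Type*} [NormedAddCommGroup V] [InnerProductSpace ℝ V]
    {n : ℕ} (b : Module.Basis (Fin n) ℝ V) (t : ℝ) (ht : 0 < t) :
    (∑' m : Fin n → ℤ, ‖∑ i, m i • b i‖ ^ 2 * Real.exp (-Real.pi * t * ‖∑ i, m i • b i‖ ^ 2))
      ≤ (n / (2 * Real.pi * t)) *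
        ∑' m : Fin n → ℤ, Real.exp (-Real.pi * t * ‖∑ i, m i • b i‖ ^ 2) := by
  have := b.tsum_sq_norm_mul_gaussian_le ht
  rwa [Module.Basis.gaussianSum_zero, Fintype.card_fin] at this
end

section
/- Let L be a full-rank lattice of rank n in a Euclidean space admitting an orthogonal Z-basis e₁ ≤ … ≤ e_n (ordered by norm), so that the i-th successive minimum satisfies λ_i(L) = ‖e_i‖. Then 0 ≤ h⁰_θ(L) + ∑_{i=1}^n log min(λ_i(L), 1) ≤ n log(3/2), where h⁰_θ(L) = log ∑_{v∈L} e^{−π‖v‖²}. -/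
/-!
For an orthogonal basis the Gaussian weight `exp (-π ‖∑ mᵢ bᵢ‖²)` factors over the coordinates,
so the lattice theta series is the product of the one-dimensional series `θ_ℤ(‖bᵢ‖²)`. It then
suffices to show `1 ≤ min (√t) 1 * θ_ℤ(t) ≤ 3/2` for every `t > 0`. For `t ≥ 1` this is
`1 ≤ θ_ℤ(t) ≤ 1 + 2e^{-π}/(1 - e^{-π}) ≤ 3/2`, and the Poisson summation identity
`θ_ℤ(1/t) = √t θ_ℤ(t)` reduces the case `t < 1` to the first one.
-/

open Real Finset

noncomputable def thetaZ (t : ℝ) : ℝ := ∑' k : ℤ, rexp (-π * t * (k : ℝ) ^ 2)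

section JacobiTheta

open Complex

lemma cexp_pi_mul_I_mul_sq_mul_ofReal_mul_I (t : ℝ) (k : ℤ) :
    cexp (π * I * (k : ℂ) ^ 2 * (t * I)) = rexp (-π * t * (k : ℝ) ^ 2) := by
  push_cast
  congr 1
  ring_nf
  rw [I_sq]
  ring

lemma ofReal_thetaZ (t : ℝ) : (thetaZ t : ℂ) = jacobiTheta (t * I) := by
  simp only [thetaZ, jacobiTheta, ofReal_tsum, cexp_pi_mul_I_mul_sq_mul_ofReal_mul_I]

lemma summable_thetaZ {t : ℝ} (ht : 0 < t) :
    Summable fun k : ℤ => rexp (-π * t * (k : ℝ) ^ 2) := by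
  have hτ : 0 < (t * I : ℂ).im := by simpa using ht
  refine summable_ofReal.mp ((summable_jacobiTheta₂_term_iff 0 _).mpr hτ |>.congr fun k => ?_)
  rw [jacobiTheta₂_term, mul_zero, zero_add, cexp_pi_mul_I_mul_sq_mul_ofReal_mul_I]

lemma abs_thetaZ_sub_one_le {t : ℝ} (ht : 0 < t) :
    |thetaZ t - 1| ≤ 2 / (1 - rexp (-π * t)) * rexp (-π * t) := by
  have hτ : 0 < (t * I : ℂ).im := by simpa using ht
  simpa [← ofReal_thetaZ, ← ofReal_one, ← ofReal_sub, norm_real] using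
    norm_jacobiTheta_sub_one_le hτ

end JacobiTheta

lemma one_le_thetaZ {t : ℝ} (ht : 0 < t) : 1 ≤ thetaZ t := by
  unfold thetaZ
  simpa using (summable_thetaZ ht).le_tsum 0 fun k _ => (exp_pos _).le

lemma thetaZ_pos {t : ℝ} (ht : 0 < t) : 0 < thetaZ t :=
  one_pos.trans_le (one_le_thetaZ ht)

lemma exp_neg_pi_le_one_fifth : rexp (-π) ≤ 1 / 5 := by
  have h := quadratic_le_exp_of_nonneg pi_pos.le
  rw [Real.exp_neg, one_div]
  exact inv_anti₀ (by norm_num) (by nlinarith [pi_gt_three])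

lemma thetaZ_le_three_halves {t : ℝ} (ht : 1 ≤ t) : thetaZ t ≤ 3 / 2 := by
  have h := abs_thetaZ_sub_one_le (one_pos.trans_le ht)
  set r := rexp (-π * t)
  have hr : r ≤ 1 / 5 := (exp_le_exp.mpr (by nlinarith [pi_pos])).trans exp_neg_pi_le_one_fifth
  have hr1 : 0 < 1 - r := by linarith
  have : 2 / (1 - r) * r ≤ 1 / 2 := by
    rw [div_mul_eq_mul_div, div_le_iff₀ hr1]
    linarith
  linarith [le_abs_self (thetaZ t - 1)]

lemma thetaZ_mem_Icc {t : ℝ} (ht : 1 ≤ t) : thetaZ t ∈ Set.Icc 1 (3 / 2) :=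
  ⟨one_le_thetaZ (one_pos.trans_le ht), thetaZ_le_three_halves ht⟩

lemma thetaZ_inv {t : ℝ} (ht : 0 < t) : thetaZ t⁻¹ = √t * thetaZ t := by
  simp only [thetaZ, ← div_eq_mul_inv, Real.tsum_exp_neg_mul_int_sq ht, sqrt_eq_rpow]
  field_simp

lemma min_sqrt_one_mul_thetaZ_mem_Icc {t : ℝ} (ht : 0 < t) :
    min √t 1 * thetaZ t ∈ Set.Icc 1 (3 / 2) := by
  rcases le_or_gt 1 t with h | h
  · rw [min_eq_right (one_le_sqrt.mpr h), one_mul]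
    exact thetaZ_mem_Icc h
  · rw [min_eq_left (sqrt_le_one.mpr h.le), ← thetaZ_inv ht]
    exact thetaZ_mem_Icc (one_le_inv₀ ht |>.mpr h.le)

theorem HasSum.mul_of_nonneg {β γ : Type*} {f : β → ℝ} {g : γ → ℝ} {s t : ℝ} (hf : HasSum f s)
    (hg : HasSum g t) (hf₀ : 0 ≤ f) (hg₀ : 0 ≤ g) :
    HasSum (fun x : β × γ => f x.1 * g x.2) (s * t) :=
  hf.mul hg (hf.summable.mul_of_nonneg hg.summable hf₀ hg₀)

theorem hasSum_prod_pi_of_nonneg {β : Type*} {n : ℕ} {f : Fin n → β → ℝ} {a : Fin n → ℝ}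
    (hf : ∀ i, 0 ≤ f i) (ha : ∀ i, HasSum (f i) (a i)) :
    HasSum (fun x : Fin n → β => ∏ i, f i (x i)) (∏ i, a i) := by
  induction n with
  | zero => simp
  | succ n ih =>
    have key := (ha 0).mul_of_nonneg (ih (fun i => hf i.succ) (fun i => ha i.succ)) (hf 0)
      fun x => prod_nonneg fun i _ => hf i.succ (x i)
    rw [← (Fin.consEquiv fun _ => β).hasSum_iff, Fin.prod_univ_succ]
    convert key using 1
    ext x
    simp [Fin.prod_univ_succ]

theorem norm_sum_smul_sq_of_pairwise_inner_eq_zero {V ι : Type*} [NormedAddCommGroup V]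
    [InnerProductSpace ℝ V] [Fintype ι] {v : ι → V}
    (hv : Pairwise fun i j => inner ℝ (v i) (v j) = 0) (c : ι → ℝ) :
    ‖∑ i, c i • v i‖ ^ 2 = ∑ i, c i ^ 2 * ‖v i‖ ^ 2 := by
  classical
  rw [← real_inner_self_eq_norm_sq, sum_inner]
  refine sum_congr rfl fun i _ => ?_
  rw [inner_sum, sum_eq_single i (fun j _ hji => by rw [inner_smul_left, inner_smul_right,
    hv hji.symm, mul_zero, mul_zero]) (by simp), real_inner_smul_left, real_inner_smul_right,
    real_inner_self_eq_norm_sq]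
  ring

theorem hasSum_exp_neg_pi_norm_sq_of_pairwise_inner_eq_zero {V : Type*} [NormedAddCommGroup V]
    [InnerProductSpace ℝ V] {n : ℕ} {v : Fin n → V}
    (hv : Pairwise fun i j => inner ℝ (v i) (v j) = 0) (hv₀ : ∀ i, v i ≠ 0) :
    HasSum (fun m : Fin n → ℤ => rexp (-π * ‖∑ i, m i • v i‖ ^ 2)) (∏ i, thetaZ (‖v i‖ ^ 2)) := by
  have h := hasSum_prod_pi_of_nonneg (f := fun i (k : ℤ) => rexp (-π * ‖v i‖ ^ 2 * (k : ℝ) ^ 2))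
    (a := fun i => thetaZ (‖v i‖ ^ 2)) (fun i k => (exp_pos _).le)
    fun i => (summable_thetaZ (pow_pos (norm_pos_iff.mpr (hv₀ i)) 2)).hasSum
  convert h using 1
  ext m
  simp only [← Int.cast_smul_eq_zsmul ℝ, norm_sum_smul_sq_of_pairwise_inner_eq_zero hv, mul_sum,
    ← exp_sum]
  congr 1
  exact sum_congr rfl fun i _ => by ring

theorem theta_invariant_orthogonal_successive_minima_general
    {V : Type*} [NormedAddCommGroup V] [InnerProductSpace ℝ V]
    {n : ℕ} (b : Module.Basis (Fin n) ℝ V)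
    (hortho : ∀ i j, i ≠ j → (inner ℝ (b i) (b j) : ℝ) = 0) :
    0 ≤ Real.log (∑' m : Fin n → ℤ, Real.exp (-Real.pi * ‖∑ i, m i • b i‖ ^ 2))
        + ∑ i, Real.log (min ‖b i‖ 1) ∧
    Real.log (∑' m : Fin n → ℤ, Real.exp (-Real.pi * ‖∑ i, m i • b i‖ ^ 2))
        + ∑ i, Real.log (min ‖b i‖ 1) ≤ n * Real.log (3 / 2) := by
  have hnorm : ∀ i, 0 < ‖b i‖ := fun i => norm_pos_iff.mpr (b.ne_zero i)
  have hpos : ∀ i, 0 < ‖b i‖ ^ 2 := fun i => pow_pos (hnorm i) 2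
  have hbound := fun i => min_sqrt_one_mul_thetaZ_mem_Icc (hpos i)
  have hlog : Real.log (∑' m : Fin n → ℤ, Real.exp (-Real.pi * ‖∑ i, m i • b i‖ ^ 2))
      + ∑ i, Real.log (min ‖b i‖ 1) = ∑ i, Real.log (min √(‖b i‖ ^ 2) 1 * thetaZ (‖b i‖ ^ 2)) := by
    rw [(hasSum_exp_neg_pi_norm_sq_of_pairwise_inner_eq_zero hortho b.ne_zero).tsum_eq,
      log_prod fun i _ => (thetaZ_pos (hpos i)).ne', ← sum_add_distrib]
    refine sum_congr rfl fun i _ => ?_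
    rw [sqrt_sq (norm_nonneg _), log_mul (lt_min (hnorm i) one_pos).ne' (thetaZ_pos (hpos i)).ne',
      add_comm]
  rw [hlog]
  refine ⟨sum_nonneg fun i _ => log_nonneg (hbound i).1, ?_⟩
  calc ∑ i, Real.log (min √(‖b i‖ ^ 2) 1 * thetaZ (‖b i‖ ^ 2))
      ≤ ∑ _i : Fin n, Real.log (3 / 2) :=
        sum_le_sum fun i _ => log_le_log (one_pos.trans_le (hbound i).1) (hbound i).2
    _ = n * Real.log (3 / 2) := by simp

theorem theta_invariant_orthogonal_successive_minima
    {V : Type*} [NormedAddCommGroup V] [InnerProductSpace ℝ V]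
    {n : ℕ} (b : Module.Basis (Fin n) ℝ V)
    (hortho : ∀ i j, i ≠ j → (inner ℝ (b i) (b j) : ℝ) = 0)
    (hmono : Monotone fun i : Fin n => ‖b i‖) :
    0 ≤ Real.log (∑' m : Fin n → ℤ, Real.exp (-Real.pi * ‖∑ i, m i • b i‖ ^ 2))
        + ∑ i, Real.log (min ‖b i‖ 1) ∧
    Real.log (∑' m : Fin n → ℤ, Real.exp (-Real.pi * ‖∑ i, m i • b i‖ ^ 2))
        + ∑ i, Real.log (min ‖b i‖ 1) ≤ n * Real.log (3 / 2) :=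
  theta_invariant_orthogonal_successive_minima_general b hortho
end

section
/- Let L be a full-rank lattice of rank n in a Euclidean space with an orthogonal Z-basis. Then −(n/2) log n + log(1 − 1/(2π)) ≤ ĥ⁰(L) + ∑_{i=1}^n log min(λ_i(L), 1) ≤ π + n log(3/2), where ĥ⁰(L) = log #{v ∈ L : ‖v‖ ≤ 1} and λ_i(L) are the successive minima. -/
/-!
Write `a i = ‖b i‖`. By orthogonality `‖∑ mᵢ bᵢ‖² = ∑ (mᵢ aᵢ)²`, and the successive minima are
the `a i` in increasing order, so the sum of the `log (min λᵢ 1)` is `∑ log (min (a i) 1)`.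

Lower bound: the box `|mᵢ| ≤ ⌊(√n aᵢ)⁻¹⌋` lies in the unit ball, and each of its sides has
`2 ⌊(√n aᵢ)⁻¹⌋ + 1 ≥ (√n min (aᵢ, 1))⁻¹` points.

Upper bound: `#{‖v‖ ≤ 1} ≤ e^π ∑ exp (-π ‖v‖²) = e^π ∏ θ(aᵢ)` with
`θ(a) = ∑ₖ exp (-π (a k)²)`. Poisson summation gives `a θ(a) = θ(a⁻¹)`, and `θ` is
antitone, so `θ(a) min (a, 1) ≤ θ(1) ≤ 3/2`.
-/

/-- The `i`-th successive minimum (for `1 ≤ i ≤ n`) of the lattice spanned over `ℤ`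
by the basis `b`. -/
noncomputable def succMin {V : Type*} [NormedAddCommGroup V] [InnerProductSpace ℝ V]
    {n : ℕ} (b : Module.Basis (Fin n) ℝ V) (i : ℕ) : ℝ :=
  sInf {r : ℝ | 0 < r ∧ i ≤ Module.finrank ℝ (Submodule.span ℝ
    {x : V | (∃ m : Fin n → ℤ, x = ∑ j, m j • b j) ∧ ‖x‖ ≤ r})}

open Real Finset

noncomputable def gaussianTheta (a : ℝ) : ℝ := ∑' k : ℤ, rexp (-π * (a * k) ^ 2)

lemma summable_exp_neg_pi_mul_sq {a : ℝ} (ha : a ≠ 0) :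
    Summable fun k : ℤ => rexp (-π * (a * k) ^ 2) := by
  have hτ : 0 < (((a ^ 2 : ℝ) : ℂ) * Complex.I).im := by
    simpa only [Complex.mul_I_im, Complex.ofReal_re] using sq_pos_of_ne_zero ha
  convert ((summable_jacobiTheta₂_term_iff 0 _).mpr hτ).norm using 2 with k
  rw [norm_jacobiTheta₂_term]
  simp only [Complex.mul_im, Complex.ofReal_re, Complex.I_im, Complex.ofReal_im, Complex.I_re,
    Complex.zero_im]
  ring_nf

lemma sum_le_gaussianTheta {a : ℝ} (ha : a ≠ 0) (s : Finset ℤ) :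
    ∑ k ∈ s, rexp (-π * (a * k) ^ 2) ≤ gaussianTheta a :=
  (summable_exp_neg_pi_mul_sq ha).sum_le_tsum s fun _ _ => (exp_pos _).le

lemma gaussianTheta_inv {a : ℝ} (ha : 0 < a) : gaussianTheta a⁻¹ = a * gaussianTheta a := by
  have h := Real.tsum_exp_neg_mul_int_sq (pow_pos ha 2)
  rw [← Real.sqrt_eq_rpow, Real.sqrt_sq ha.le] at h
  simp only [gaussianTheta, mul_pow, ← mul_assoc, h, inv_pow, ← div_eq_mul_inv]
  field_simp

lemma gaussianTheta_anti {a b : ℝ} (ha : 0 < a) (hab : a ≤ b) :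
    gaussianTheta b ≤ gaussianTheta a := by
  refine Summable.tsum_le_tsum (fun k => ?_) (summable_exp_neg_pi_mul_sq (ha.trans_le hab).ne')
    (summable_exp_neg_pi_mul_sq ha.ne')
  rw [exp_le_exp, mul_pow, mul_pow]
  have := pow_le_pow_left₀ ha.le hab 2
  nlinarith [mul_nonneg (mul_nonneg pi_pos.le (sq_nonneg (k : ℝ))) (sub_nonneg.2 this)]

lemma gaussianTheta_mul_min_le {a : ℝ} (ha : 0 < a) :
    gaussianTheta a * min a 1 ≤ gaussianTheta 1 := by
  rcases le_total a 1 with h | h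
  · rw [min_eq_left h, mul_comm, ← gaussianTheta_inv ha]
    exact gaussianTheta_anti one_pos (one_le_inv_iff₀.2 ⟨ha, h⟩)
  · rw [min_eq_right h, mul_one]
    exact gaussianTheta_anti one_pos h

lemma gaussianTheta_one_le : gaussianTheta 1 ≤ 3 / 2 := by
  have hI : jacobiTheta Complex.I = (gaussianTheta 1 : ℂ) := by
    simp only [jacobiTheta, gaussianTheta, Complex.ofReal_tsum, one_mul]
    congr 1 with k
    push_cast
    ring_nf
    simp
  have h := norm_jacobiTheta_sub_one_le (τ := Complex.I) (by simp)
  rw [hI, Complex.I_im, mul_one, ← Complex.ofReal_one, ← Complex.ofReal_sub,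
    Complex.norm_real, Real.norm_eq_abs] at h
  have hq : rexp (-π) ≤ 1 / 5 := by
    rw [exp_neg, inv_le_comm₀ (exp_pos _) (by norm_num)]
    nlinarith [Real.quadratic_le_exp_of_nonneg pi_pos.le, pi_gt_three]
  have hq0 := exp_pos (-π)
  have : 2 / (1 - rexp (-π)) * rexp (-π) ≤ 1 / 2 := by
    rw [div_mul_eq_mul_div, div_le_iff₀ (by linarith)]
    linarith
  linarith [le_abs_self (gaussianTheta 1 - 1)]

lemma Nat.card_subtype_eq_card_filter {α : Type*} {p : α → Prop} [DecidablePred p]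
    {s : Finset α} (hs : ∀ x, p x → x ∈ s) : Nat.card {x // p x} = #(s.filter p) := by
  rw [← Nat.card_eq_finsetCard]
  exact Nat.card_congr (Equiv.subtypeEquivRight fun x => by
    rw [mem_filter]; exact ⟨fun h => ⟨hs x h, h⟩, And.right⟩)

lemma le_natFloor_div_add_one_mul_min {c x : ℝ} (hc : c ≤ 1) (hx : 0 < x) :
    c ≤ (⌊c / x⌋₊ + 1) * min x 1 := by
  rcases le_total x 1 with h | h
  · rw [min_eq_left h, ← div_le_iff₀ hx]
    exact (Nat.lt_floor_add_one _).le
  · rw [min_eq_right h, mul_one]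
    linarith [(Nat.cast_nonneg ⌊c / x⌋₊ : (0 : ℝ) ≤ _)]

noncomputable def intBox {ι : Type*} [Fintype ι] [DecidableEq ι] (K : ι → ℕ) : Finset (ι → ℤ) :=
  Fintype.piFinset fun i => Icc (-(K i : ℤ)) (K i)

section box
variable {ι : Type*} [Fintype ι] [DecidableEq ι]

lemma mem_intBox {K : ι → ℕ} {m : ι → ℤ} : m ∈ intBox K ↔ ∀ i, |(m i : ℝ)| ≤ K i := by
  simp only [intBox, Fintype.mem_piFinset, mem_Icc, ← abs_le]
  exact forall_congr' fun i => by exact_mod_cast Iff.rfl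

lemma card_intBox (K : ι → ℕ) : #(intBox K) = ∏ i, (2 * K i + 1) := by
  simp only [intBox, Fintype.card_piFinset, Int.card_Icc]
  exact prod_congr rfl fun i _ => by omega

end box

section orthogonal
variable {ι V : Type*} [Fintype ι] [NormedAddCommGroup V] [InnerProductSpace ℝ V] {b : ι → V}

lemma norm_sum_zsmul_sq (hb : Pairwise fun i j => inner ℝ (b i) (b j) = 0) (m : ι → ℤ) :
    ‖∑ i, m i • b i‖ ^ 2 = ∑ i, ((m i : ℝ) * ‖b i‖) ^ 2 := by
  simp only [← Int.cast_smul_eq_zsmul ℝ, ← real_inner_self_eq_norm_sq, sum_inner, inner_sum,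
    real_inner_smul_left, real_inner_smul_right]
  refine sum_congr rfl fun i _ => ?_
  rw [sum_eq_single i (fun j _ hji => by rw [hb hji, mul_zero, mul_zero]) (by simp),
    real_inner_self_eq_norm_sq]
  ring

lemma abs_mul_norm_le_norm_sum_zsmul (hb : Pairwise fun i j => inner ℝ (b i) (b j) = 0)
    (m : ι → ℤ) (j : ι) : |(m j : ℝ)| * ‖b j‖ ≤ ‖∑ i, m i • b i‖ := by
  refine (pow_le_pow_iff_left₀ (by positivity) (norm_nonneg _) two_ne_zero).1 ?_
  rw [mul_pow, sq_abs, ← mul_pow, norm_sum_zsmul_sq hb]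
  exact single_le_sum (f := fun i => ((m i : ℝ) * ‖b i‖) ^ 2) (fun i _ => sq_nonneg _)
    (mem_univ j)

variable [DecidableEq ι]

lemma mem_intBox_of_norm_sum_zsmul_le_one (hb : Pairwise fun i j => inner ℝ (b i) (b j) = 0)
    (hb0 : ∀ i, b i ≠ 0) {m : ι → ℤ} (hm : ‖∑ i, m i • b i‖ ≤ 1) :
    m ∈ intBox fun i => ⌊‖b i‖⁻¹⌋₊ := by
  refine mem_intBox.2 fun i => ?_
  have hmi : |(m i : ℝ)| ≤ ‖b i‖⁻¹ := by
    rw [← one_div, le_div_iff₀ (norm_pos_iff.2 (hb0 i))]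
    exact (abs_mul_norm_le_norm_sum_zsmul hb m i).trans hm
  rw [← Int.cast_abs, ← Nat.cast_natAbs, Nat.cast_le]
  exact Nat.le_floor (by rwa [Nat.cast_natAbs, Int.cast_abs])

lemma norm_sum_zsmul_le_one_of_mem_intBox (hb : Pairwise fun i j => inner ℝ (b i) (b j) = 0)
    (hb0 : ∀ i, b i ≠ 0) {m : ι → ℤ}
    (hm : m ∈ intBox fun i => ⌊(√(Fintype.card ι))⁻¹ / ‖b i‖⌋₊) : ‖∑ i, m i • b i‖ ≤ 1 := by
  have hcoord : ∀ i, ((m i : ℝ) * ‖b i‖) ^ 2 ≤ (Fintype.card ι : ℝ)⁻¹ := fun i => by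
    have hbi := norm_pos_iff.2 (hb0 i)
    have h : |(m i : ℝ)| * ‖b i‖ ≤ (√(Fintype.card ι))⁻¹ :=
      ((mul_le_mul_iff_left₀ hbi).2 (mem_intBox.1 hm i)).trans
        ((le_div_iff₀ hbi).1 (Nat.floor_le (by positivity)))
    calc ((m i : ℝ) * ‖b i‖) ^ 2 = (|(m i : ℝ)| * ‖b i‖) ^ 2 := by rw [mul_pow, mul_pow, sq_abs]
      _ ≤ ((√(Fintype.card ι))⁻¹) ^ 2 := pow_le_pow_left₀ (by positivity) h 2
      _ = (Fintype.card ι : ℝ)⁻¹ := by rw [inv_pow, Real.sq_sqrt (Nat.cast_nonneg _)]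
  refine (sq_le_one_iff₀ (norm_nonneg _)).1 ?_
  rw [norm_sum_zsmul_sq hb]
  calc ∑ i, ((m i : ℝ) * ‖b i‖) ^ 2 ≤ ∑ _i : ι, (Fintype.card ι : ℝ)⁻¹ :=
        sum_le_sum fun i _ => hcoord i
    _ ≤ 1 := by
      rw [sum_const, card_univ, nsmul_eq_mul]
      exact mul_inv_le_one

lemma prod_le_natCard_norm_sum_zsmul_le_one
    (hb : Pairwise fun i j => inner ℝ (b i) (b j) = 0) (hb0 : ∀ i, b i ≠ 0) :
    ∏ i, (2 * ⌊(√(Fintype.card ι))⁻¹ / ‖b i‖⌋₊ + 1)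
      ≤ Nat.card {m : ι → ℤ // ‖∑ i, m i • b i‖ ≤ 1} := by
  rw [Nat.card_subtype_eq_card_filter fun m => mem_intBox_of_norm_sum_zsmul_le_one hb hb0,
    ← card_intBox]
  exact card_le_card fun m hm => mem_filter.2
    ⟨mem_intBox_of_norm_sum_zsmul_le_one hb hb0 (norm_sum_zsmul_le_one_of_mem_intBox hb hb0 hm),
      norm_sum_zsmul_le_one_of_mem_intBox hb hb0 hm⟩

lemma natCard_norm_sum_zsmul_le_one_le (hb : Pairwise fun i j => inner ℝ (b i) (b j) = 0)
    (hb0 : ∀ i, b i ≠ 0) :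
    (Nat.card {m : ι → ℤ // ‖∑ i, m i • b i‖ ≤ 1} : ℝ) ≤ rexp π * ∏ i, gaussianTheta ‖b i‖ := by
  set K : ι → ℕ := fun i => ⌊‖b i‖⁻¹⌋₊
  set f : (ι → ℤ) → ℝ := fun m => rexp (π * (1 - ‖∑ i, m i • b i‖ ^ 2))
  rw [Nat.card_subtype_eq_card_filter fun m => mem_intBox_of_norm_sum_zsmul_le_one hb hb0]
  calc (#((intBox K).filter fun m => ‖∑ i, m i • b i‖ ≤ 1) : ℝ)
      = ∑ m ∈ (intBox K).filter fun m => ‖∑ i, m i • b i‖ ≤ 1, 1 := by simp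
    _ ≤ ∑ m ∈ (intBox K).filter fun m => ‖∑ i, m i • b i‖ ≤ 1, f m := by
      refine sum_le_sum fun m hm => one_le_exp (mul_nonneg pi_pos.le ?_)
      have := (mem_filter.1 hm).2
      nlinarith [norm_nonneg (∑ i, m i • b i)]
    _ ≤ ∑ m ∈ intBox K, f m :=
      sum_le_sum_of_subset_of_nonneg (filter_subset _ _) fun _ _ _ => (exp_pos _).le
    _ = rexp π * ∏ i, ∑ k ∈ Icc (-(K i : ℤ)) (K i), rexp (-π * (‖b i‖ * k) ^ 2) := by
      rw [prod_univ_sum, mul_sum]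
      refine sum_congr rfl fun m _ => ?_
      simp only [f]
      rw [← exp_sum, ← exp_add, norm_sum_zsmul_sq hb]
      congr 1
      rw [mul_sub, mul_one, mul_sum, sub_eq_add_neg, ← sum_neg_distrib]
      exact congrArg _ (sum_congr rfl fun i _ => by ring)
    _ ≤ rexp π * ∏ i, gaussianTheta ‖b i‖ := by
      gcongr with i
      exact sum_le_gaussianTheta (norm_ne_zero_iff.2 (hb0 i)) _

lemma inv_sqrt_card_pow_le_natCard_mul_prod_min
    (hb : Pairwise fun i j => inner ℝ (b i) (b j) = 0) (hb0 : ∀ i, b i ≠ 0) :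
    (√(Fintype.card ι))⁻¹ ^ Fintype.card ι
      ≤ Nat.card {m : ι → ℤ // ‖∑ i, m i • b i‖ ≤ 1} * ∏ i, min ‖b i‖ 1 := by
  set c := (√(Fintype.card ι))⁻¹
  calc c ^ Fintype.card ι = ∏ _i : ι, c := by rw [prod_const, card_univ]
    _ ≤ ∏ i, ((2 * ⌊c / ‖b i‖⌋₊ + 1 : ℕ) : ℝ) * min ‖b i‖ 1 := by
      refine prod_le_prod (fun _ _ => by positivity) fun i _ => ?_
      have hc : c ≤ 1 := inv_le_one_of_one_le₀ (Real.one_le_sqrt.2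
        (Nat.one_le_cast.2 (Fintype.card_pos_iff.2 ⟨i⟩)))
      refine (le_natFloor_div_add_one_mul_min hc (norm_pos_iff.2 (hb0 i))).trans ?_
      gcongr
      push_cast
      linarith [(Nat.cast_nonneg ⌊c / ‖b i‖⌋₊ : (0 : ℝ) ≤ _)]
    _ ≤ Nat.card {m : ι → ℤ // ‖∑ i, m i • b i‖ ≤ 1} * ∏ i, min ‖b i‖ 1 := by
      rw [prod_mul_distrib, ← Nat.cast_prod]
      gcongr
      exact prod_le_natCard_norm_sum_zsmul_le_one hb hb0

lemma natCard_mul_prod_min_le (hb : Pairwise fun i j => inner ℝ (b i) (b j) = 0)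
    (hb0 : ∀ i, b i ≠ 0) :
    Nat.card {m : ι → ℤ // ‖∑ i, m i • b i‖ ≤ 1} * ∏ i, min ‖b i‖ 1
      ≤ rexp π * (3 / 2) ^ Fintype.card ι := by
  have hmin : ∀ i, 0 < min ‖b i‖ 1 := fun i => lt_min (norm_pos_iff.2 (hb0 i)) one_pos
  calc (Nat.card {m : ι → ℤ // ‖∑ i, m i • b i‖ ≤ 1} : ℝ) * ∏ i, min ‖b i‖ 1
    _ ≤ (rexp π * ∏ i, gaussianTheta ‖b i‖) * ∏ i, min ‖b i‖ 1 := by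
      gcongr
      exact natCard_norm_sum_zsmul_le_one_le hb hb0
    _ = rexp π * ∏ i, gaussianTheta ‖b i‖ * min ‖b i‖ 1 := by rw [mul_assoc, prod_mul_distrib]
    _ ≤ rexp π * ∏ _i : ι, (3 / 2 : ℝ) := by
      gcongr with i
      · exact fun i _ => mul_nonneg (tsum_nonneg fun _ => (exp_pos _).le) (hmin i).le
      · exact (gaussianTheta_mul_min_le (norm_pos_iff.2 (hb0 i))).trans gaussianTheta_one_le
    _ = rexp π * (3 / 2) ^ Fintype.card ι := by rw [prod_const, card_univ]

end orthogonal

lemma Tuple.succ_le_card_filter_le_iff {n : ℕ} {α : Type*} [LinearOrder α] (f : Fin n → α)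
    (i : Fin n) (r : α) : (i : ℕ) + 1 ≤ #{j | f j ≤ r} ↔ f (Tuple.sort f i) ≤ r := by
  have hmono := Tuple.monotone_sort f
  set t : Finset (Fin n) := {k | f (Tuple.sort f k) ≤ r}
  rw [card_equiv (t := t) (Tuple.sort f).symm (by simp [t])]
  constructor
  · intro h
    by_contra! hr
    have hsub : t ⊆ Iio i := fun k hk => by
      simp only [t, mem_filter, mem_univ, true_and] at hk
      exact mem_Iio.2 (lt_of_not_ge fun hik => (hr.trans_le (hmono hik)).not_ge hk)
    have := card_le_card hsub
    rw [Fin.card_Iio] at this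
    omega
  · intro h
    have hsub : Iic i ⊆ t := fun k hk => by
      simpa [t] using (hmono (mem_Iic.1 hk)).trans h
    simpa using card_le_card hsub

section basis
variable {ι V : Type*} [Fintype ι] [NormedAddCommGroup V] [InnerProductSpace ℝ V]

lemma finrank_span_norm_le_eq_card (b : Module.Basis ι ℝ V)
    (hb : Pairwise fun i j => inner ℝ (b i) (b j) = 0) (r : ℝ) :
    Module.finrank ℝ (Submodule.span ℝ {x : V | (∃ m : ι → ℤ, x = ∑ j, m j • b j) ∧ ‖x‖ ≤ r})
      = #{j | ‖b j‖ ≤ r} := by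
  classical
  have hspan : Submodule.span ℝ {x : V | (∃ m : ι → ℤ, x = ∑ j, m j • b j) ∧ ‖x‖ ≤ r}
      = Submodule.span ℝ (Set.range (b ∘ Subtype.val : {j // ‖b j‖ ≤ r} → V)) := by
    apply le_antisymm
    · rw [Submodule.span_le]
      rintro _ ⟨⟨m, rfl⟩, hmr⟩
      refine Submodule.sum_mem _ fun j _ => ?_
      rcases eq_or_ne (m j) 0 with hmj | hmj
      · simp [hmj]
      · refine Submodule.smul_of_tower_mem _ _ (Submodule.subset_span ⟨⟨j, ?_⟩, rfl⟩)
        have : 1 ≤ |(m j : ℝ)| := by exact_mod_cast Int.one_le_abs hmj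
        nlinarith [abs_mul_norm_le_norm_sum_zsmul hb m j, norm_nonneg (b j)]
    · refine Submodule.span_mono ?_
      rintro _ ⟨j, rfl⟩
      exact ⟨⟨Pi.single j 1, by simp [Pi.single_apply]⟩, j.2⟩
  rw [hspan, finrank_span_eq_card (b.linearIndependent.comp _ Subtype.val_injective),
    Fintype.card_subtype]

end basis

lemma succMin_succ_eq {V : Type*} [NormedAddCommGroup V] [InnerProductSpace ℝ V] {n : ℕ}
    (b : Module.Basis (Fin n) ℝ V) (hb : Pairwise fun i j => inner ℝ (b i) (b j) = 0)
    (i : Fin n) : succMin b ((i : ℕ) + 1) = ‖b (Tuple.sort (fun j => ‖b j‖) i)‖ := by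
  have hpos : 0 < ‖b (Tuple.sort (fun j => ‖b j‖) i)‖ := norm_pos_iff.2 (b.ne_zero _)
  have hset : {r : ℝ | 0 < r ∧ (i : ℕ) + 1 ≤ Module.finrank ℝ (Submodule.span ℝ
      {x : V | (∃ m : Fin n → ℤ, x = ∑ j, m j • b j) ∧ ‖x‖ ≤ r})}
      = Set.Ici ‖b (Tuple.sort (fun j => ‖b j‖) i)‖ := by
    ext r
    rw [Set.mem_ofPred_eq, finrank_span_norm_le_eq_card b hb,
      Tuple.succ_le_card_filter_le_iff (fun j => ‖b j‖), Set.mem_Ici]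
    exact ⟨And.right, fun h => ⟨hpos.trans_le h, h⟩⟩
  rw [succMin, hset, csInf_Ici]

lemma sum_succMin_succ_eq {V : Type*} [NormedAddCommGroup V] [InnerProductSpace ℝ V] {n : ℕ}
    (b : Module.Basis (Fin n) ℝ V) (hb : Pairwise fun i j => inner ℝ (b i) (b j) = 0)
    (f : ℝ → ℝ) : ∑ i : Fin n, f (succMin b ((i : ℕ) + 1)) = ∑ j, f ‖b j‖ := by
  simp only [succMin_succ_eq b hb]
  exact Equiv.sum_comp (Tuple.sort _) fun j => f ‖b j‖

theorem h0_orthogonal_successive_minima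
    {V : Type*} [NormedAddCommGroup V] [InnerProductSpace ℝ V]
    {n : ℕ} (b : Module.Basis (Fin n) ℝ V)
    (hortho : ∀ i j, i ≠ j → (inner ℝ (b i) (b j) : ℝ) = 0) :
    -(n / 2 : ℝ) * Real.log n + Real.log (1 - 1 / (2 * Real.pi))
      ≤ Real.log (Nat.card {m : Fin n → ℤ // ‖∑ i, m i • b i‖ ≤ 1})
        + ∑ i : Fin n, Real.log (min (succMin b ((i : ℕ) + 1)) 1) ∧
    Real.log (Nat.card {m : Fin n → ℤ // ‖∑ i, m i • b i‖ ≤ 1})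
        + ∑ i : Fin n, Real.log (min (succMin b ((i : ℕ) + 1)) 1)
      ≤ Real.pi + n * Real.log (3 / 2) := by
  have hb : Pairwise fun i j => inner ℝ (b i) (b j) = 0 := fun i j => hortho i j
  have hmin : ∀ i, 0 < min ‖b i‖ 1 := fun i => lt_min (norm_pos_iff.2 (b.ne_zero i)) one_pos
  have hlower := inv_sqrt_card_pow_le_natCard_mul_prod_min hb b.ne_zero
  have hupper := natCard_mul_prod_min_le hb b.ne_zero
  rw [Fintype.card_fin] at hlower hupper
  have hc : 0 < (√(n : ℝ))⁻¹ ^ n := by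
    rcases Nat.eq_zero_or_pos n with rfl | hn
    · simp
    · positivity
  have hN : (0 : ℝ) < Nat.card {m : Fin n → ℤ // ‖∑ i, m i • b i‖ ≤ 1} :=
    pos_of_mul_pos_left (hc.trans_le hlower) (prod_pos fun i _ => hmin i).le
  rw [sum_succMin_succ_eq b hb fun r => Real.log (min r 1),
    ← Real.log_prod fun i _ => (hmin i).ne', ← Real.log_mul hN.ne' (prod_pos fun i _ => hmin i).ne']
  refine ⟨?_, (Real.log_le_log (hc.trans_le hlower) hupper).trans_eq ?_⟩
  · have : Real.log (1 - 1 / (2 * π)) ≤ 0 :=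
      Real.log_nonpos (by rw [sub_nonneg, div_le_one (by positivity)]; linarith [pi_gt_three])
        (by linarith [show 0 < 1 / (2 * π) by positivity])
    refine le_trans ?_ (Real.log_le_log hc hlower)
    rw [Real.log_pow, Real.log_inv, Real.log_sqrt (Nat.cast_nonneg _)]
    linarith
  · rw [Real.log_mul (exp_pos _).ne' (by positivity), Real.log_exp, Real.log_pow]
end
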